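/- arXiv:0901.4306 — 2 statements merged into one kernel-verified Lean document; each statement's English description precedes it below -/
import Mathlib

section
/- Let S ⊆ ℂ ∪ {∞} (the Riemann sphere) be a set containing ∞ that is invariant under the translation z ↦ z + 2 on ℂ. If there exists a bounded open rectangle R ⊆ ℂ such that S ∩ R ≠ ∅ and S ∩ ∂R = ∅, then S is not locally connected at ∞. -/
open OnePoint Filter Topology Set

/-!
Let `V` be a preconnected neighbourhood of `∞` in `S`. A translate `R + 2n` of the rectangle
reaches into `V`, still meets `S`, and its frontier still misses `S`. Then the images of `R + 2n`
and of the complement of its closure are disjoint open sets of the sphere (the closure is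
compact) covering `V` and both meeting it, a contradiction.
-/

lemma add_nsmul_mem_iff {G : Type*} [AddGroup G] {T : Set G} {p : G}
    (hT : ∀ z ∈ T, z + p ∈ T ∧ z - p ∈ T) (z : G) (n : ℕ) : z + n • p ∈ T ↔ z ∈ T := by
  induction n with
  | zero => simp
  | succ n ih =>
    rw [succ_nsmul, ← add_assoc, ← ih]
    exact ⟨fun h ↦ by simpa using (hT _ h).2, fun h ↦ (hT _ h).1⟩

lemma tendsto_add_nsmul_cocompact {E : Type*} [NormedAddCommGroup E] [NormedSpace ℝ E]
    (z : E) {p : E} (hp : p ≠ 0) : Tendsto (fun n : ℕ ↦ z + n • p) atTop (cocompact E) := by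
  refine tendsto_cocompact_of_tendsto_dist_comp_atTop z ?_
  simp only [dist_eq_norm, add_sub_cancel_left, RCLike.norm_nsmul ℝ, nsmul_eq_mul]
  exact tendsto_natCast_atTop_atTop.atTop_mul_const (norm_pos_iff.2 hp)

namespace OnePoint

variable {X : Type*} [TopologicalSpace X]

lemma coe_notMem_of_isPreconnected {W : Set (OnePoint X)} (hW : IsPreconnected W)
    (hinf : ∞ ∈ W) {O : Set X} (hO : IsOpen O) (hOc : IsCompact (closure O))
    (hfr : ∀ z ∈ frontier O, (z : OnePoint X) ∉ W) {z : X} (hz : z ∈ O) :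
    (z : OnePoint X) ∉ W := by
  have hcover : W ⊆ ((↑) '' closure O)ᶜ ∪ (↑) '' O := by
    intro x hx
    induction x using OnePoint.rec with
    | infty => exact Or.inl infty_notMem_image_coe
    | coe w =>
      by_cases hw : w ∈ O
      · exact Or.inr ⟨w, hw, rfl⟩
      · refine Or.inl fun ⟨w', hw', hw'w⟩ ↦ ?_
        rw [coe_eq_coe] at hw'w
        subst hw'w
        exact hfr w' ⟨hw', by rwa [hO.interior_eq]⟩ hx
  have hdisj : Disjoint ((↑) '' closure O : Set (OnePoint X))ᶜ ((↑) '' O) :=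
    disjoint_compl_left_iff_subset.2 (image_mono subset_closure)
  intro hzW
  have hsub := hW.subset_left_of_subset_union (isOpen_compl_image_coe.2 ⟨isClosed_closure, hOc⟩)
    (isOpen_image_coe.2 hO) hdisj hcover ⟨∞, hinf, infty_notMem_image_coe⟩
  exact hsub hzW ⟨z, subset_closure hz, rfl⟩

lemma not_isPreconnected_of_mem_nhds_infty {S : Set (OnePoint X)} (hinf : ∞ ∈ S)
    (hsep : ∀ t ∈ 𝓝 (∞ : OnePoint X), ∃ O : Set X, IsOpen O ∧ IsCompact (closure O) ∧
      (∀ z ∈ frontier O, (z : OnePoint X) ∉ S) ∧ ∃ z ∈ O, (z : OnePoint X) ∈ S ∩ t)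
    {V : Set S} (hV : V ∈ 𝓝 ⟨∞, hinf⟩) : ¬ IsPreconnected V := by
  intro hVc
  obtain ⟨t, ht, htV⟩ := (mem_nhds_subtype S _ V).1 hV
  obtain ⟨O, hO, hOc, hfr, z, hzO, hzS, hzt⟩ := hsep t ht
  have hWS : Subtype.val '' V ⊆ S := image_subset_range _ _ |>.trans Subtype.range_val.subset
  exact coe_notMem_of_isPreconnected (hVc.image _ continuous_subtype_val.continuousOn)
    ⟨_, mem_of_mem_nhds hV, rfl⟩ hO hOc (fun w hw hwV ↦ hfr w hw (hWS hwV)) hzO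
    ⟨⟨z, hzS⟩, htV hzt, rfl⟩

lemma not_isPreconnected_of_mem_nhds_infty_of_periodic {E : Type*} [NormedAddCommGroup E]
    [NormedSpace ℝ E] {S : Set (OnePoint E)} (hinf : ∞ ∈ S) {p : E} (hp : p ≠ 0)
    (hper : ∀ z : E, (z : OnePoint E) ∈ S → ((z + p : E) : OnePoint E) ∈ S ∧
      ((z - p : E) : OnePoint E) ∈ S)
    {O : Set E} (hO : IsOpen O) (hOc : IsCompact (closure O))
    (hmeet : ∃ z ∈ O, (z : OnePoint E) ∈ S) (hfr : ∀ z ∈ frontier O, (z : OnePoint E) ∉ S)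
    {V : Set S} (hV : V ∈ 𝓝 ⟨∞, hinf⟩) : ¬ IsPreconnected V := by
  refine not_isPreconnected_of_mem_nhds_infty hinf (fun t ht ↦ ?_) hV
  obtain ⟨z, hzO, hzS⟩ := hmeet
  have hto : Tendsto (fun n : ℕ ↦ ((z + n • p : E) : OnePoint E)) atTop (𝓝 ∞) :=
    tendsto_coe_infty.comp (coclosedCompact_eq_cocompact (X := E) ▸
      tendsto_add_nsmul_cocompact z hp)
  obtain ⟨n, hn⟩ := (hto.eventually ht).exists
  have hshift := add_nsmul_mem_iff (T := ((↑) : E → OnePoint E) ⁻¹' S) hper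
  let e := Homeomorph.subRight (n • p)
  refine ⟨e ⁻¹' O, hO.preimage e.continuous, ?_, fun w hw hwS ↦ ?_, z + n • p, ?_,
    (hshift z n).2 hzS, hn⟩
  · rw [← e.preimage_closure]
    exact e.isCompact_preimage.2 hOc
  · rw [← e.preimage_frontier] at hw
    refine hfr _ hw ((hshift _ n).1 ?_)
    simpa [e] using hwS
  · simpa [e] using hzO

end OnePoint

theorem stmt0_general (S : Set (OnePoint ℂ)) (hinf : (∞ : OnePoint ℂ) ∈ S)
    (hinv : ∀ z : ℂ, (z : OnePoint ℂ) ∈ S →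
      ((z + 2 : ℂ) : OnePoint ℂ) ∈ S ∧ ((z - 2 : ℂ) : OnePoint ℂ) ∈ S)
    (a b c d : ℝ)
    (R : Set ℂ) (hR : R = {z : ℂ | a < z.re ∧ z.re < b ∧ c < z.im ∧ z.im < d})
    (hmeet : ∃ z : ℂ, z ∈ R ∧ (z : OnePoint ℂ) ∈ S)
    (hbd : ∀ z : ℂ, z ∈ frontier R → (z : OnePoint ℂ) ∉ S) :
    ¬ (∀ U ∈ nhds (⟨∞, hinf⟩ : S), ∃ V ∈ nhds (⟨∞, hinf⟩ : S), V ⊆ U ∧ IsPreconnected V) := by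
  have hRprod : R = Ioo a b ×ℂ Ioo c d := by
    ext z
    simp [hR, Complex.mem_reProdIm, and_assoc]
  have hRo : IsOpen R := hRprod ▸ isOpen_Ioo.reProdIm isOpen_Ioo
  have hRc : IsCompact (closure R) :=
    hRprod ▸ ((Metric.isBounded_Ioo a b).reProdIm (Metric.isBounded_Ioo c d)).isCompact_closure
  intro h
  obtain ⟨V, hV, -, hVc⟩ := h univ univ_mem
  exact OnePoint.not_isPreconnected_of_mem_nhds_infty_of_periodic hinf two_ne_zero hinv hRo hRc
    hmeet hbd hV hVc

/-- If `S ⊆ ℂ ∪ {∞}` contains `∞`, is invariant under `z ↦ z + 2` (and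
`z ↦ z - 2`), and there is a bounded open rectangle `R` with `S ∩ R ≠ ∅` and
`S ∩ ∂R = ∅`, then `S` is not locally connected at `∞`. -/
theorem stmt0 (S : Set (OnePoint ℂ)) (hinf : (∞ : OnePoint ℂ) ∈ S)
    (hinv : ∀ z : ℂ, (z : OnePoint ℂ) ∈ S →
      ((z + 2 : ℂ) : OnePoint ℂ) ∈ S ∧ ((z - 2 : ℂ) : OnePoint ℂ) ∈ S)
    (a b c d : ℝ) (hab : a < b) (hcd : c < d)
    (R : Set ℂ) (hR : R = {z : ℂ | a < z.re ∧ z.re < b ∧ c < z.im ∧ z.im < d})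
    (hmeet : ∃ z : ℂ, z ∈ R ∧ (z : OnePoint ℂ) ∈ S)
    (hbd : ∀ z : ℂ, z ∈ frontier R → (z : OnePoint ℂ) ∉ S) :
    ¬ (∀ U ∈ nhds (⟨∞, hinf⟩ : S), ∃ V ∈ nhds (⟨∞, hinf⟩ : S), V ⊆ U ∧ IsPreconnected V) :=
  stmt0_general S hinf hinv a b c d R hR hmeet hbd
end

section
/- Let S ⊆ ℂ ∪ {∞} contain ∞, be invariant under z ↦ z + 2, and suppose there is a closed rectangle R ⊆ ℂ of width less than 2 with sides parallel to the axes such that S meets the interior of R but S ∩ ∂R = ∅. Then every neighborhood of ∞ in S that is contained in the complement of the closure of R's horizontal strip translates has infinitely many connected components; in particular S is not locally connected at ∞. -/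
/-!
Let `z₀ ∈ S ∩ interior R`. For each translate `K = R + 2n`, the images in the Riemann sphere of
`interior K` and of the complement of `K` (together with `∞`) are disjoint open sets covering
everything off `∂K`. Since `S` misses every `∂R + 2n`, a preconnected subset of `S` through the
point `z₀ + 2n` therefore stays inside the bounded set `interior R + 2n`. These points tend to `∞`,
so no preconnected neighbourhood of `∞` exists, and in a neighbourhood `V` of `∞` avoiding all
`∂R + 2n` the components of the points `z₀ + 2n` are pairwise distinct, the translates of `R`
being pairwise disjoint because `R` has width `< 2`.
-/

open OnePoint Set Filter Topology

namespace OnePoint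

variable {X : Type*} [TopologicalSpace X]

theorem subset_image_coe_interior_of_isPreconnected {K : Set X} (hKc : IsClosed K)
    (hK : IsCompact K) {W : Set (OnePoint X)} (hW : IsPreconnected W)
    (hfr : ∀ x ∈ frontier K, (x : OnePoint X) ∉ W) {x : X} (hxW : (x : OnePoint X) ∈ W)
    (hxK : x ∈ interior K) : W ⊆ (↑) '' interior K := by
  refine hW.subset_left_of_subset_union (v := ((↑) '' K)ᶜ)
    (isOpenEmbedding_coe.isOpenMap _ isOpen_interior) (isOpen_compl_image_coe.2 ⟨hKc, hK⟩)
    (disjoint_compl_right_iff_subset.2 (image_mono interior_subset)) ?_ ⟨x, hxW, x, hxK, rfl⟩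
  intro y hy
  induction y using OnePoint.rec with
  | infty => exact Or.inr infty_notMem_image_coe
  | coe z =>
    by_cases hz : z ∈ K
    · refine Or.inl ⟨z, ?_, rfl⟩
      by_contra hzi
      exact hfr z ⟨subset_closure hz, hzi⟩ hy
    · exact Or.inr fun ⟨z', hz', h⟩ => hz (coe_injective h ▸ hz')

theorem subset_image_coe_sub_preimage_interior_of_isPreconnected {G : Type*} [TopologicalSpace G]
    [AddGroup G] [IsTopologicalAddGroup G] {K : Set G} (hKc : IsClosed K) (hK : IsCompact K)
    (k : G) {W : Set (OnePoint G)} (hW : IsPreconnected W)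
    (hfr : ∀ z : G, (z : OnePoint G) ∈ W → z - k ∉ frontier K) {x : G}
    (hxW : (x : OnePoint G) ∈ W) (hxK : x - k ∈ interior K) :
    W ⊆ (↑) '' ((· - k) ⁻¹' interior K) := by
  have hτ : ⇑(Homeomorph.subRight k) = (· - k) := rfl
  rw [← hτ, Homeomorph.preimage_interior]
  refine subset_image_coe_interior_of_isPreconnected
    (hKc.preimage (Homeomorph.continuous _)) ((Homeomorph.isCompact_preimage _).2 hK) hW ?_ hxW
    (by rwa [← Homeomorph.preimage_interior])
  rw [← Homeomorph.preimage_frontier]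
  exact fun z hz hzW => hfr z hzW hz

end OnePoint

theorem add_zsmul_mem_of_forall_add_sub_mem {G : Type*} [AddGroup G] {T : Set G} {w : G}
    (hT : ∀ z ∈ T, z + w ∈ T ∧ z - w ∈ T) {z : G} (hz : z ∈ T) (n : ℤ) : z + n • w ∈ T := by
  induction n using Int.induction_on with
  | zero => simpa using hz
  | succ n ih =>
    rw [add_zsmul, one_zsmul, ← add_assoc]
    exact (hT _ ih).1
  | pred n ih =>
    rw [sub_zsmul, one_zsmul, ← sub_eq_add_neg, ← add_sub_assoc]
    exact (hT _ ih).2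

theorem tendsto_coe_add_two_mul_natCast_infty (z : ℂ) :
    Tendsto (fun n : ℕ => ((z + 2 * n : ℂ) : OnePoint ℂ)) atTop (𝓝 ∞) := by
  have h2n : Tendsto (fun n : ℕ => (2 * n : ℂ)) atTop (Bornology.cobounded ℂ) := by
    refine ((tendsto_natCast_atTop_cobounded (α := ℂ)).comp
      (tendsto_id.const_mul_atTop' two_pos)).congr fun n => ?_
    simp
  refine tendsto_coe_infty.comp ?_
  rw [coclosedCompact_eq_cocompact, ← Metric.cobounded_eq_cocompact]
  exact (tendsto_const_add_cobounded z).comp h2n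

theorem infinite_setOf_connectedComponentIn {Y : Type*} [TopologicalSpace Y] {V : Set Y}
    {q : ℕ → Y} (hqV : ∀ n, q n ∈ V) (hq : ∀ n m, q m ∈ connectedComponentIn V (q n) → n = m) :
    {C : Set Y | ∃ x ∈ V, C = connectedComponentIn V x}.Infinite := by
  refine infinite_of_injective_forall_mem (f := fun n => connectedComponentIn V (q n))
    (fun n m hnm => hq n m ?_) fun n => ⟨q n, hqV n, rfl⟩
  rw [show connectedComponentIn V (q n) = _ from hnm]
  exact mem_connectedComponentIn (hqV m)

theorem Int.eq_zero_of_mem_reProdIm_of_add_two_mul_mem {a b : ℝ} {s t : Set ℝ} {z : ℂ} {k : ℤ}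
    (hab : b - a < 2) (hz : z ∈ Icc a b ×ℂ s) (hzk : z + 2 * k ∈ Icc a b ×ℂ t) : k = 0 := by
  obtain ⟨⟨hz₁, hz₂⟩, -⟩ := Complex.mem_reProdIm.1 hz
  obtain ⟨⟨hzk₁, hzk₂⟩, -⟩ := Complex.mem_reProdIm.1 hzk
  simp only [Complex.add_re, Complex.mul_re, Complex.intCast_re, Complex.intCast_im,
    Complex.re_ofNat, Complex.im_ofNat, zero_mul, sub_zero] at hzk₁ hzk₂
  have hlt : (k : ℝ) < 1 := by linarith
  have hgt : (-1 : ℝ) < k := by linarith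
  have : k < 1 := by exact_mod_cast hlt
  have : -1 < k := by exact_mod_cast hgt
  omega

theorem stmt1_general (S : Set (OnePoint ℂ)) (hinf : (∞ : OnePoint ℂ) ∈ S)
    (hinv : ∀ z : ℂ, (z : OnePoint ℂ) ∈ S →
      ((z + 2 : ℂ) : OnePoint ℂ) ∈ S ∧ ((z - 2 : ℂ) : OnePoint ℂ) ∈ S)
    (a b c d : ℝ) (hwidth : b - a < 2)
    (R : Set ℂ) (hR : R = {z : ℂ | a ≤ z.re ∧ z.re ≤ b ∧ c ≤ z.im ∧ z.im ≤ d})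
    (hmeet : ∃ z : ℂ, z ∈ interior R ∧ (z : OnePoint ℂ) ∈ S)
    (hbd : ∀ z : ℂ, z ∈ frontier R → (z : OnePoint ℂ) ∉ S) :
    (∀ V ∈ nhds (⟨∞, hinf⟩ : S),
      (∀ x ∈ V, ∀ z : ℂ, (x : S).1 = (z : OnePoint ℂ) →
        ∀ n : ℤ, z - 2 * (n : ℂ) ∉ frontier R) →
      {C : Set S | ∃ x ∈ V, C = connectedComponentIn V x}.Infinite) ∧
    ¬ (∀ U ∈ nhds (⟨∞, hinf⟩ : S), ∃ V ∈ nhds (⟨∞, hinf⟩ : S), V ⊆ U ∧ IsPreconnected V) := by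
  obtain ⟨z₀, hz₀, hz₀S⟩ := hmeet
  have hRrect : R = Icc a b ×ℂ Icc c d := by
    rw [hR]
    ext z
    simp [Complex.mem_reProdIm, and_assoc]
  have hRc : IsCompact R := hRrect ▸ isCompact_Icc.reProdIm isCompact_Icc
  have hSshift : ∀ z : ℂ, (z : OnePoint ℂ) ∈ S → ∀ k : ℤ, ((z + 2 * k : ℂ) : OnePoint ℂ) ∈ S :=
    fun z hz k => by
      simpa [zsmul_eq_mul, mul_comm] using add_zsmul_mem_of_forall_add_sub_mem
        (T := ((↑) : ℂ → OnePoint ℂ) ⁻¹' S) (w := (2 : ℂ)) hinv hz k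
  let p : ℕ → S := fun n => ⟨_, hSshift z₀ hz₀S n⟩
  have hp : Tendsto p atTop (𝓝 ⟨∞, hinf⟩) :=
    tendsto_subtype_rng.2 (by simpa [p] using tendsto_coe_add_two_mul_natCast_infty z₀)
  have hstay (n : ℕ) (W : Set S) (hW : IsPreconnected W) (hpW : p n ∈ W)
      (hfr : ∀ x ∈ W, ∀ z : ℂ, x.1 = z → z - 2 * n ∉ frontier R) :
      Subtype.val '' W ⊆ (↑) '' ((fun z : ℂ => z - 2 * n) ⁻¹' interior R) :=
    subset_image_coe_sub_preimage_interior_of_isPreconnected hRc.isClosed hRc _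
      (hW.image _ continuous_subtype_val.continuousOn)
      (fun z ⟨x, hxW, hxz⟩ => hfr x hxW z hxz) ⟨p n, hpW, rfl⟩ (by simpa using hz₀)
  constructor
  · intro V hV hVfr
    obtain ⟨N, hN⟩ := eventually_atTop.1 (hp.eventually_mem hV)
    refine infinite_setOf_connectedComponentIn (q := fun n => p (N + n))
      (fun n => hN _ (N.le_add_right n)) fun n m hm => ?_
    obtain ⟨z, hz, hzeq⟩ := hstay (N + n) _ isPreconnected_connectedComponentIn
      (mem_connectedComponentIn (hN _ (N.le_add_right n)))
      (fun x hx z hz => by exact_mod_cast hVfr x (connectedComponentIn_subset _ _ hx) z hz (N + n))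
      ⟨_, hm, rfl⟩
    have hmn : z₀ + 2 * ((m - n : ℤ) : ℂ) ∈ Icc a b ×ℂ Icc c d := by
      rw [← hRrect]
      convert interior_subset hz using 1
      rw [coe_injective hzeq]
      push_cast
      ring
    have := Int.eq_zero_of_mem_reProdIm_of_add_two_mul_mem hwidth (hRrect ▸ interior_subset hz₀) hmn
    omega
  · intro H
    obtain ⟨V, hV, -, hVc⟩ := H univ univ_mem
    obtain ⟨N, hN⟩ := eventually_atTop.1 (hp.eventually_mem hV)
    have hfr : ∀ x ∈ V, ∀ z : ℂ, x.1 = z → z - 2 * N ∉ frontier R := fun x _ z hz hzR =>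
      hbd _ hzR (by simpa [sub_eq_add_neg] using hSshift z (hz ▸ x.2) (-N))
    exact infty_notMem_image_coe (hstay N V hVc (hN N le_rfl) hfr ⟨_, mem_of_mem_nhds hV, rfl⟩)

/-- If `S ⊆ ℂ ∪ {∞}` contains `∞`, is translation invariant under `z ↦ z ± 2`,
and there is a closed axis-parallel rectangle `R` of width `< 2` such that `S` meets the
interior of `R` but misses `∂R`, then every neighborhood of `∞` in `S` avoiding all the
translates of `∂R` has infinitely many connected components; in particular `S` is not
locally connected at `∞`. -/
theorem stmt1 (S : Set (OnePoint ℂ)) (hinf : (∞ : OnePoint ℂ) ∈ S)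
    (hinv : ∀ z : ℂ, (z : OnePoint ℂ) ∈ S →
      ((z + 2 : ℂ) : OnePoint ℂ) ∈ S ∧ ((z - 2 : ℂ) : OnePoint ℂ) ∈ S)
    (a b c d : ℝ) (hab : a < b) (hwidth : b - a < 2) (hcd : c < d)
    (R : Set ℂ) (hR : R = {z : ℂ | a ≤ z.re ∧ z.re ≤ b ∧ c ≤ z.im ∧ z.im ≤ d})
    (hmeet : ∃ z : ℂ, z ∈ interior R ∧ (z : OnePoint ℂ) ∈ S)
    (hbd : ∀ z : ℂ, z ∈ frontier R → (z : OnePoint ℂ) ∉ S) :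
    (∀ V ∈ nhds (⟨∞, hinf⟩ : S),
      (∀ x ∈ V, ∀ z : ℂ, (x : S).1 = (z : OnePoint ℂ) →
        ∀ n : ℤ, z - 2 * (n : ℂ) ∉ frontier R) →
      {C : Set S | ∃ x ∈ V, C = connectedComponentIn V x}.Infinite) ∧
    ¬ (∀ U ∈ nhds (⟨∞, hinf⟩ : S), ∃ V ∈ nhds (⟨∞, hinf⟩ : S), V ⊆ U ∧ IsPreconnected V) :=
  stmt1_general S hinf hinv a b c d hwidth R hR hmeet hbd
end
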